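/- Let s ∈ ℝ with s > 2 and define A(s;x) = −(1/π)·Im F*(s;x), where F*(s;x) = 2·Γ(s+1)/(2π)^s · e^{−iπs/2} · ∑_{k=1}^∞ e^{2πikx}/k^s. Then for every x ∈ ℝ, the function y ↦ A(s;y) has derivative s·A(s−1;x) at x; that is, ∂ₓA(s;x) = s·A(s−1;x). (This is the A-side umbral ladder.) -/

import Mathlib

open Real Complex

/-- The polylogarithm on the unit circle: `Li_s(e^{2πix}) = ∑_{k=1}^∞ e^{2πikx}/k^s`. -/
noncomputable def liCircle (s : ℂ) (x : ℝ) : ℂ :=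
  ∑' k : ℕ+, Complex.exp (2 * Real.pi * Complex.I * k * x) / (k : ℂ) ^ s

/-- The master function `F*(s;x) = 2·Γ(s+1)/(2π)^s · e^{−iπs/2} · Li_s(e^{2πix})`. -/
noncomputable def Fstar (s : ℂ) (x : ℝ) : ℂ :=
  2 * Complex.Gamma (s + 1) / (2 * Real.pi : ℂ) ^ s *
    Complex.exp (-Real.pi * Complex.I * s / 2) * liCircle s x

/-- The analytic Clausen-type function `A(s;x) = −(1/π)·Im F*(s;x)` for real `s`. -/
noncomputable def analyticA (s : ℝ) (x : ℝ) : ℝ := -(1 / Real.pi) * (Fstar s x).im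

/-!
Differentiating the polylogarithm series termwise (legitimate for `Re s > 2`, where the
differentiated series `∑ 2πi e^{2πikx}/k^{s-1}` converges uniformly) gives
`∂ₓ Li_s(e^{2πix}) = 2πi · Li_{s-1}(e^{2πix})`. The prefactor of `F*` is built to absorb the
factor `2πi`: `Γ(s+1) = s Γ(s)`, `(2π)^s = 2π (2π)^{s-1}` and `e^{-iπs/2} = -i e^{-iπ(s-1)/2}`,
so `∂ₓ F*(s;x) = s F*(s-1;x)`; for real `s` the claim is the imaginary part of this identity.
-/

lemma norm_cexp_two_pi_I_mul_div_cpow (s : ℂ) (k : ℕ+) (y : ℝ) :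
    ‖cexp (2 * π * I * k * y) / (k : ℂ) ^ s‖ = (k : ℝ) ^ (-s.re) := by
  have hk : (0 : ℝ) < (k : ℕ) := by exact_mod_cast k.pos
  rw [norm_div, show 2 * π * I * k * y = ((2 * π * k * y : ℝ) : ℂ) * I by push_cast; ring,
    norm_exp_ofReal_mul_I, norm_natCast_cpow_of_pos k.pos,
    rpow_neg hk.le, one_div]

lemma summable_liCircle_terms {s : ℂ} (hs : 1 < s.re) (x : ℝ) :
    Summable fun k : ℕ+ => cexp (2 * π * I * k * x) / (k : ℂ) ^ s := by
  refine .of_norm ?_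
  simp_rw [norm_cexp_two_pi_I_mul_div_cpow]
  exact ((summable_nat_rpow (p := -s.re)).2 (by linarith)).subtype _

lemma hasDerivAt_cexp_two_pi_I_mul_div_cpow (s : ℂ) (k : ℕ+) (y : ℝ) :
    HasDerivAt (fun y : ℝ => cexp (2 * π * I * k * y) / (k : ℂ) ^ s)
      (2 * π * I * (cexp (2 * π * I * k * y) / (k : ℂ) ^ (s - 1))) y := by
  have hk : (k : ℂ) ≠ 0 := by exact_mod_cast k.ne_zero
  refine ((((hasDerivAt_id y).ofReal_comp).const_mul (2 * π * I * k : ℂ)).cexp.div_const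
    ((k : ℂ) ^ s)).congr_deriv ?_
  rw [cpow_sub _ _ hk, cpow_one]
  field_simp
  simp

theorem hasDerivAt_liCircle {s : ℂ} (hs : 2 < s.re) (x : ℝ) :
    HasDerivAt (liCircle s) (2 * π * I * liCircle (s - 1) x) x := by
  rw [liCircle, ← tsum_mul_left]
  refine hasDerivAt_tsum (u := fun k : ℕ+ => 2 * π * (k : ℝ) ^ (-(s - 1).re)) ?_
    (hasDerivAt_cexp_two_pi_I_mul_div_cpow s) (fun k y => ?_)
    (summable_liCircle_terms (by linarith) x) x
  · exact (((summable_nat_rpow (p := -(s - 1).re)).2 (by simp; linarith)).subtype _).mul_left _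
  · rw [norm_mul, norm_cexp_two_pi_I_mul_div_cpow]
    simp [abs_of_pos pi_pos]

lemma mul_Fstar_sub_one {s : ℂ} (hs : s ≠ 0) (x : ℝ) :
    s * Fstar (s - 1) x = 2 * Gamma (s + 1) / (2 * π : ℂ) ^ s * cexp (-π * I * s / 2) *
      (2 * π * I * liCircle (s - 1) x) := by
  have h2pi : (2 * π : ℂ) ≠ 0 := by simp [pi_ne_zero]
  have hexp : cexp (-π * I * s / 2) = -I * cexp (-π * I * (s - 1) / 2) := by
    rw [show -π * I * s / 2 = -(π / 2 * I) + -π * I * (s - 1) / 2 by ring, Complex.exp_add, Complex.exp_neg,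
      exp_pi_div_two_mul_I, inv_I]
  rw [Fstar, sub_add_cancel, Gamma_add_one _ hs, cpow_sub _ _ h2pi, cpow_one, hexp]
  field_simp
  ring_nf
  simp [I_sq]

theorem hasDerivAt_Fstar {s : ℂ} (hs : 2 < s.re) (x : ℝ) :
    HasDerivAt (Fstar s) (s * Fstar (s - 1) x) x := by
  have hs0 : s ≠ 0 := by rintro rfl; norm_num at hs
  rw [mul_Fstar_sub_one hs0]
  exact (hasDerivAt_liCircle hs x).const_mul _

/-- A-side umbral ladder: for real `s > 2`, `∂ₓ A(s;x) = s · A(s−1;x)`. -/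
theorem analyticA_hasDerivAt (s : ℝ) (hs : 2 < s) (x : ℝ) :
    HasDerivAt (fun y : ℝ => analyticA s y) (s * analyticA (s - 1) x) x := by
  have hF := hasDerivAt_Fstar (s := s) (by simpa using hs) x
  refine ((imCLM.hasFDerivAt.comp_hasDerivAt x hF).const_mul (-(1 / π))).congr_deriv ?_
  simp only [analyticA, ofReal_sub, ofReal_one, imCLM_apply, im_ofReal_mul]
  ring
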